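/- Let ℛ be a linear growing TRS over a signature 𝓖 and let T ⊆ 𝒯(𝓖) be a recognizable set of ground terms. Then the set (→_ℛ*)[T] = { s ∈ 𝒯(𝓖) : s →_ℛ* t for some t ∈ T } of ground terms that rewrite in ℛ to a term in T is recognizable. -/

import Mathlib

set_option maxHeartbeats 1000000

/-! ## Terms over a signature -/

/-- Terms over a signature given by a type `F` of function symbols together with
an arity function `ar`; variables are natural numbers. -/
inductive Term (F : Type) (ar : F → ℕ) : Type
  | var : ℕ → Term F ar
  | app : (f : F) → (Fin (ar f) → Term F ar) → Term F ar

namespace Term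

variable {F : Type} {ar : F → ℕ}

/-- The (finite) set of variables of a term. -/
def vars : Term F ar → Finset ℕ
  | var n => {n}
  | app _ ts => Finset.univ.biUnion fun i => (ts i).vars

/-- A term is ground if it contains no variables. -/
def Ground (t : Term F ar) : Prop := t.vars = ∅

/-- The number of occurrences of the variable `n` in a term. -/
def count (n : ℕ) : Term F ar → ℕ
  | var m => if m = n then 1 else 0
  | app _ ts => ∑ i, (ts i).count n

/-- A term is linear if no variable occurs twice in it. -/
def Linear (t : Term F ar) : Prop := ∀ n, t.count n ≤ 1

/-- Applying a substitution to a term. -/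
def subst (σ : ℕ → Term F ar) : Term F ar → Term F ar
  | var n => σ n
  | app f ts => app f fun i => (ts i).subst σ

/-- The subterm at a position (a list of argument indices), if the position is valid. -/
def subtermAt : Term F ar → List ℕ → Option (Term F ar)
  | t, [] => some t
  | var _, _ :: _ => none
  | app f ts, i :: p => if h : i < ar f then (ts ⟨i, h⟩).subtermAt p else none

/-- Replacing the subterm at a position, if the position is valid. -/
def replaceAt : Term F ar → List ℕ → Term F ar → Option (Term F ar)
  | _, [], u => some u
  | var _, _ :: _, _ => none
  | app f ts, i :: p, u =>
      if h : i < ar f then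
        ((ts ⟨i, h⟩).replaceAt p u).map fun s => app f (Function.update ts ⟨i, h⟩ s)
      else none

/-- `s.IsSubtermOf t` : `s` is a subterm of `t`. -/
def IsSubtermOf (s t : Term F ar) : Prop := ∃ p, t.subtermAt p = some s

/-- Relabelling of function symbols along an arity-preserving map of signatures. -/
def relabel {G : Type} {arG : G → ℕ} (φ : F → G) (h : ∀ f, arG (φ f) = ar f) :
    Term F ar → Term G arG
  | var n => var n
  | app f ts => app (φ f) fun i => (ts (Fin.cast (h f) i)).relabel φ h

end Term

/-! ## Rewriting -/

/-- One-step rewriting with a set of rewrite rules: there are a position `p` of `s`,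
a rule `(l, r)` and a substitution `σ` with `s|_p = lσ` and `t = s[rσ]_p`. -/
def Rewrites {F : Type} {ar : F → ℕ} (R : Set (Term F ar × Term F ar))
    (s t : Term F ar) : Prop :=
  ∃ (p : List ℕ) (l r : Term F ar) (σ : ℕ → Term F ar),
    (l, r) ∈ R ∧ s.subtermAt p = some (l.subst σ) ∧ s.replaceAt p (r.subst σ) = some t

/-- Many-step rewriting (reflexive–transitive closure). -/
abbrev RewritesStar {F : Type} {ar : F → ℕ} (R : Set (Term F ar × Term F ar)) :
    Term F ar → Term F ar → Prop :=
  Relation.ReflTransGen (Rewrites R)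

/-- A term rewriting system: a finite set of rules whose left-hand sides are not variables. -/
structure TRS (F : Type) (ar : F → ℕ) where
  rules : Set (Term F ar × Term F ar)
  finite : rules.Finite
  lhs_not_var : ∀ lr ∈ rules, ∀ n, lr.1 ≠ Term.var n

namespace TRS

variable {F : Type} {ar : F → ℕ}

def LeftLinear (R : TRS F ar) : Prop := ∀ lr ∈ R.rules, lr.1.Linear

def RightLinear (R : TRS F ar) : Prop := ∀ lr ∈ R.rules, lr.2.Linear

/-- A TRS is linear if all left- and right-hand sides are linear terms. -/
def IsLinear (R : TRS F ar) : Prop := R.LeftLinear ∧ R.RightLinear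

/-- A TRS is growing if every variable occurring both in the left- and the right-hand
side of a rule occurs at depth 1 in the left-hand side. -/
def Growing (R : TRS F ar) : Prop :=
  ∀ lr ∈ R.rules, ∀ n ∈ lr.1.vars, n ∈ lr.2.vars →
    ∀ (f : F) (ts : Fin (ar f) → Term F ar), lr.1 = Term.app f ts →
      ∀ i, n ∈ (ts i).vars → ts i = Term.var n

/-- A redex is an instance of a left-hand side. -/
def IsRedex (R : TRS F ar) (s : Term F ar) : Prop :=
  ∃ lr ∈ R.rules, ∃ σ : ℕ → Term F ar, s = lr.1.subst σ

/-- `p` is a redex position of `s`. -/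
def RedexPos (R : TRS F ar) (s : Term F ar) (p : List ℕ) : Prop :=
  ∃ u, s.subtermAt p = some u ∧ R.IsRedex u

def Reducible (R : TRS F ar) (s : Term F ar) : Prop := ∃ p, R.RedexPos s p

/-- A term is root-stable if it cannot be rewritten to a redex. -/
def RootStable (R : TRS F ar) (s : Term F ar) : Prop :=
  ¬ ∃ t, RewritesStar R.rules s t ∧ R.IsRedex t

/-- Ground normal forms. -/
def NFset (R : TRS F ar) : Set (Term F ar) := { t | t.Ground ∧ ¬ R.Reducible t }

/-- Ground redexes. -/
def RedexSet (R : TRS F ar) : Set (Term F ar) := { t | t.Ground ∧ R.IsRedex t }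

/-- Root-stable ground terms. -/
def RSset (R : TRS F ar) : Set (Term F ar) := { t | t.Ground ∧ R.RootStable t }

/-- Relabelling a TRS along an arity-preserving map of signatures. -/
def relabel {G : Type} {arG : G → ℕ} (R : TRS F ar) (φ : F → G)
    (h : ∀ f, arG (φ f) = ar f) : TRS G arG where
  rules := (fun lr => (lr.1.relabel φ h, lr.2.relabel φ h)) '' R.rules
  finite := R.finite.image _
  lhs_not_var := by
    rintro lr ⟨lr0, h0, rfl⟩ n hn
    dsimp only at hn
    cases h1 : lr0.1 with
    | var m => exact absurd h1 (R.lhs_not_var lr0 h0 m)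
    | app f ts =>
        rw [h1] at hn
        simp only [Term.relabel] at hn
        simp at hn

end TRS

/-! ## Tree automata -/

/-- A transition rule `f(q₁,…,qₙ) → q` of a bottom-up tree automaton. -/
abbrev TARule (F : Type) (ar : F → ℕ) (Q : Type) : Type :=
  (f : F) × ((Fin (ar f) → Q) × Q)

/-- A (finite bottom-up) tree automaton without ε-transitions. -/
structure TreeAutomaton (F : Type) (ar : F → ℕ) (Q : Type) where
  trans : Set (TARule F ar Q)
  final : Set Q

/-- `Reaches Δ t q` : the ground term `t` rewrites to the state `q` using the
transition rules `Δ`. -/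
inductive Reaches {F : Type} {ar : F → ℕ} {Q : Type} (Δ : Set (TARule F ar Q)) :
    Term F ar → Q → Prop
  | app {f : F} {ts : Fin (ar f) → Term F ar} {qs : Fin (ar f) → Q} {q : Q} :
      (∀ i, Reaches Δ (ts i) (qs i)) → (⟨f, qs, q⟩ : TARule F ar Q) ∈ Δ →
      Reaches Δ (Term.app f ts) q

/-- `ReachesT Δ θ t q` : the term `t`, whose variables are interpreted as the states
given by `θ`, rewrites to the state `q` using the transition rules `Δ`. -/
inductive ReachesT {F : Type} {ar : F → ℕ} {Q : Type} (Δ : Set (TARule F ar Q))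
    (θ : ℕ → Q) : Term F ar → Q → Prop
  | var (n : ℕ) : ReachesT Δ θ (Term.var n) (θ n)
  | app {f : F} {ts : Fin (ar f) → Term F ar} {qs : Fin (ar f) → Q} {q : Q} :
      (∀ i, ReachesT Δ θ (ts i) (qs i)) → (⟨f, qs, q⟩ : TARule F ar Q) ∈ Δ →
      ReachesT Δ θ (Term.app f ts) q

/-- The language of a tree automaton: all ground terms reaching a final state. -/
def Lang {F : Type} {ar : F → ℕ} {Q : Type} (A : TreeAutomaton F ar Q) :
    Set (Term F ar) :=
  { t | t.Ground ∧ ∃ q ∈ A.final, Reaches A.trans t q }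

/-- A set of ground terms is recognizable if it is the language of some finite
tree automaton. -/
def Recognizable {F : Type} {ar : F → ℕ} (T : Set (Term F ar)) : Prop :=
  ∃ (Q : Type) (_ : Fintype Q) (A : TreeAutomaton F ar Q), T = Lang A

/-- The set of states occurring in a set of transition rules. -/
def statesOf {F : Type} {ar : F → ℕ} {Q : Type} (Γ : Set (TARule F ar Q)) : Set Q :=
  { q | ∃ ρ ∈ Γ, ρ.2.2 = q ∨ ∃ i, ρ.2.1 i = q }

/-! ## The automaton `ℬ(ℛ)` -/

/-- The canonical representative of the state `⟨t⟩` of `ℬ(ℛ)`: all variables are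
identified with the single state `⟨x⟩`, represented by `var 0`. -/
def stPattern {F : Type} {ar : F → ℕ} : Term F ar → Term F ar
  | Term.var _ => Term.var 0
  | Term.app f ts => Term.app f ts

/-- `S_ℛ`: the set of all subterms of arguments of left-hand sides of `ℛ`. -/
def SR {F : Type} {ar : F → ℕ} (R : TRS F ar) : Set (Term F ar) :=
  { s | ∃ lr ∈ R.rules, ∃ (f : F) (ts : Fin (ar f) → Term F ar),
        lr.1 = Term.app f ts ∧ ∃ i, s.IsSubtermOf (ts i) }

/-- The representatives of the states of `ℬ(ℛ)`: the patterns of terms of `S_ℛ`,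
together with `⟨x⟩`. -/
def BStateSet {F : Type} {ar : F → ℕ} (R : TRS F ar) : Set (Term F ar) :=
  stPattern '' SR R ∪ {Term.var 0}

/-- The matching rules of `ℬ(ℛ)` (with states encoded by `enc`):
`f(⟨t₁⟩,…,⟨tₙ⟩) → ⟨t⟩` for every `t = f(t₁,…,tₙ) ∈ S_ℛ`. -/
def BMatch {F : Type} {ar : F → ℕ} {Q : Type} (R : TRS F ar) (enc : Term F ar → Q) :
    Set (TARule F ar Q) :=
  { ρ | ∃ (f : F) (ts : Fin (ar f) → Term F ar), Term.app f ts ∈ SR R ∧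
        ρ = ⟨f, fun i => enc (stPattern (ts i)), enc (Term.app f ts)⟩ }

/-- The propagation rules `f(⟨x⟩,…,⟨x⟩) → ⟨x⟩` for every function symbol `f`. -/
def BProp {F : Type} {ar : F → ℕ} {Q : Type} (enc : Term F ar → Q) :
    Set (TARule F ar Q) :=
  { ρ | ∃ f : F, ρ = ⟨f, fun _ => enc (Term.var 0), enc (Term.var 0)⟩ }

/-- The transition rules of the automaton `ℬ(ℛ)`. -/
def BTrans {F : Type} {ar : F → ℕ} {Q : Type} (R : TRS F ar) (enc : Term F ar → Q) :
    Set (TARule F ar Q) :=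
  BMatch R enc ∪ BProp enc

/-- `Σ(t)`: the set of ground instances of the term `t`. -/
def GInst {F : Type} {ar : F → ℕ} (t : Term F ar) : Set (Term F ar) :=
  { s | s.Ground ∧ ∃ σ, s = t.subst σ }

/-! ## Saturation -/

/-- The state `qᵢ` associated to the argument `lᵢ` of a left-hand side in the
saturation rule: `lᵢθ` if `lᵢ` is a variable occurring in `r` (whose variable set
is `rv`), and `⟨lᵢ⟩` otherwise. -/
def satArg {F : Type} {ar : F → ℕ} {Q : Type} (enc : Term F ar → Q) (θ : ℕ → Q)
    (rv : Finset ℕ) : Term F ar → Q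
  | Term.var n => if n ∈ rv then θ n else enc (Term.var 0)
  | Term.app f ts => enc (Term.app f ts)

/-- One step of the saturation process: add all transition rules `f(q₁,…,qₙ) → q`
obtained from a rewrite rule `f(l₁,…,lₙ) → r` and a state substitution `θ`
(with values among the states `Qc` of the automaton) such that `rθ →_Γ* q`. -/
def satStep {F : Type} {ar : F → ℕ} {Q : Type} (R : TRS F ar) (enc : Term F ar → Q)
    (Qc : Set Q) (Γ : Set (TARule F ar Q)) : Set (TARule F ar Q) :=
  Γ ∪ { ρ | ∃ (f : F) (ls : Fin (ar f) → Term F ar) (r : Term F ar) (θ : ℕ → Q) (q : Q),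
        (Term.app f ls, r) ∈ R.rules ∧ (∀ n ∈ r.vars, θ n ∈ Qc) ∧ ReachesT Γ θ r q ∧
        ρ = ⟨f, fun i => satArg enc θ r.vars (ls i), q⟩ }

/-- The saturated set of transition rules: the closure of `Γ0` under the saturation
inference rule. -/
def satGamma {F : Type} {ar : F → ℕ} {Q : Type} (R : TRS F ar) (enc : Term F ar → Q)
    (Qc : Set Q) (Γ0 : Set (TARule F ar Q)) : Set (TARule F ar Q) :=
  ⋃ n, (satStep R enc Qc)^[n] Γ0

/-! ## The automaton `𝒞_T(ℛ)` and its extension `𝒞'_T(ℛ)` -/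

/-- The data of the construction of the automaton `𝒞_T(ℛ)`: an automaton `𝒜_T`
recognizing `T` with all states accessible and state set `QA`, together with an
encoding `enc` of the states `⟨t⟩` of `ℬ(ℛ)` into the common state type `Q`, such
that every state common to `𝒜_T` and `ℬ(ℛ)` accepts the same set of terms in both
automata. -/
structure CSetup {G : Type} [Fintype G] {arG : G → ℕ} (Q : Type) [Fintype Q]
    (Rg : TRS G arG) (T : Set (Term G arG)) where
  enc : Term G arG → Q
  A : TreeAutomaton G arG Q
  QA : Set Q
  henc : Set.InjOn enc (BStateSet Rg)
  hAstates : ∀ ρ ∈ A.trans, ρ.2.2 ∈ QA ∧ ∀ i, ρ.2.1 i ∈ QA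
  hfinal : A.final ⊆ QA
  hacc : ∀ q ∈ QA, ∃ s : Term G arG, s.Ground ∧ Reaches A.trans s q
  hground : ∃ s : Term G arG, s.Ground
  hshared : ∀ q ∈ QA ∩ enc '' BStateSet Rg, ∀ s : Term G arG,
      Reaches A.trans s q ↔ Reaches (BTrans Rg enc) s q
  hT : T = Lang A

namespace CSetup

variable {G : Type} [Fintype G] {arG : G → ℕ} {Q : Type} [Fintype Q]
  {Rg : TRS G arG} {T : Set (Term G arG)}

/-- The set of states of the automaton `𝒞_T(ℛ)`. -/
def Qstates (C : CSetup Q Rg T) : Set Q := C.QA ∪ C.enc '' BStateSet Rg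

/-- The transition rules of `𝒞_T(ℛ)` before saturation: the union of `𝒜_T` and `ℬ(ℛ)`. -/
def Γ0 (C : CSetup Q Rg T) : Set (TARule G arG Q) := C.A.trans ∪ BTrans Rg C.enc

/-- The transition rules of `𝒞_T(ℛ)` after saturation. -/
def Γsat (C : CSetup Q Rg T) : Set (TARule G arG Q) :=
  satGamma Rg C.enc C.Qstates C.Γ0

end CSetup

/-- The redex rules `f(⟪l₁⟫,…,⟪lₙ⟫) → q_r` for every left-hand side `f(l₁,…,lₙ)`. -/
def RedexRules {F : Type} {ar : F → ℕ} {Q : Type} (R : TRS F ar)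
    (enc2 : Term F ar → Q) (qr : Q) : Set (TARule F ar Q) :=
  { ρ | ∃ (f : F) (ls : Fin (ar f) → Term F ar) (r : Term F ar),
        (Term.app f ls, r) ∈ R.rules ∧
        ρ = ⟨f, fun i => enc2 (stPattern (ls i)), qr⟩ }

/-- The rules `f(⟨x⟩,…,q_r,…,⟨x⟩) → q_r`. -/
def QrProp {F : Type} {ar : F → ℕ} {Q : Type} (enc : Term F ar → Q) (qr : Q) :
    Set (TARule F ar Q) :=
  { ρ | ∃ (f : F) (j : Fin (ar f)),
        ρ = ⟨f, fun i => if i = j then qr else enc (Term.var 0), qr⟩ }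

/-- The data of the construction of the automaton `𝒞'_T(ℛ)`: `𝒞_T(ℛ)` extended with
a fresh copy `⟪t⟫` (encoded by `enc2`, with `⟪x⟫ = ⟨x⟩`) of the states of `ℬ(ℛ)` and
a fresh state `q_r`. -/
structure CpSetup {G : Type} [Fintype G] {arG : G → ℕ} (Q : Type) [Fintype Q]
    (Rg : TRS G arG) (T : Set (Term G arG)) extends CSetup Q Rg T where
  enc2 : Term G arG → Q
  qr : Q
  henc2 : Set.InjOn enc2 (BStateSet Rg)
  hx : enc2 (Term.var 0) = enc (Term.var 0)
  hfresh : (enc2 '' (BStateSet Rg \ {Term.var 0}) ∪ {qr}) ∩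
              (QA ∪ enc '' BStateSet Rg) = ∅
  hqr : qr ∉ enc2 '' (BStateSet Rg \ {Term.var 0})

namespace CpSetup

variable {G : Type} [Fintype G] {arG : G → ℕ} {Q : Type} [Fintype Q]
  {Rg : TRS G arG} {T : Set (Term G arG)}

/-- The transition rules `Γ'` of the automaton `𝒞'_T(ℛ)`. -/
def Γ' (C : CpSetup Q Rg T) : Set (TARule G arG Q) :=
  C.toCSetup.Γsat ∪ BMatch Rg C.enc2 ∪ RedexRules Rg C.enc2 C.qr ∪ QrProp C.enc C.qr

end CpSetup

/-! ## The signature `𝓖 = 𝓕 ∪ {•}` -/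

/-- The arity function of the extended signature `𝓕 ∪ {•}` (with `•` the fresh
constant `none`). -/
def arB {F : Type} (ar : F → ℕ) : Option F → ℕ
  | none => 0
  | some f => ar f

/-- The term `•`. -/
def bulletTm {F : Type} {ar : F → ℕ} : Term (Option F) (arB ar) :=
  Term.app none Fin.elim0

/-- The embedding of `𝒯(𝓕)`-terms into terms over `𝓕 ∪ {•}`. -/
def liftB {F : Type} {ar : F → ℕ} : Term F ar → Term (Option F) (arB ar) :=
  Term.relabel some (fun _ => rfl)

/-- A TRS over `𝓕` viewed as a TRS over `𝓕 ∪ {•}`. -/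
def TRS.liftB {F : Type} {ar : F → ℕ} (R : TRS F ar) : TRS (Option F) (arB ar) :=
  R.relabel some (fun _ => rfl)

/-- The TRS `ℛ• = ℛ ∪ {• → •}` over the signature `𝓕 ∪ {•}`. -/
def TRS.bullet {F : Type} {ar : F → ℕ} (R : TRS F ar) : TRS (Option F) (arB ar) where
  rules := R.liftB.rules ∪ {(bulletTm, bulletTm)}
  finite := R.liftB.finite.union (Set.finite_singleton _)
  lhs_not_var := by
    rintro lr (h | h) n hn
    · exact R.liftB.lhs_not_var lr h n hn
    · rw [Set.mem_singleton_iff] at h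
      rw [h] at hn
      simp [bulletTm] at hn

/-! ## The automaton `𝒟(ℛ)` -/

/-- For a symbol `g` and sets of states `Ss` for the arguments, the set
`g(S₁,…,Sₙ)↓` of states reachable from `g` applied to states chosen from the `Ssᵢ`. -/
def oneStep {G : Type} {arG : G → ℕ} {Q : Type} (Γ : Set (TARule G arG Q)) (g : G)
    (Ss : Fin (arG g) → Set Q) : Set Q :=
  { q | ∃ qs : Fin (arG g) → Q, (∀ i, qs i ∈ Ss i) ∧ (⟨g, qs, q⟩ : TARule G arG Q) ∈ Γ }

/-- `t↓` for a ground term `t`: the set of states reachable from `t`. -/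
def dn {G : Type} {arG : G → ℕ} {Q : Type} (Γ : Set (TARule G arG Q))
    (t : Term G arG) : Set Q :=
  { q | Reaches Γ t q }

/-- There is a rewrite rule with left-hand side `g(l₁,…,lₙ)` such that
`⟪lᵢ⟫ ∈ Ssᵢ` for all `i`. -/
def LhsMatch {G : Type} {arG : G → ℕ} {Q : Type} (Rg : TRS G arG)
    (enc2 : Term G arG → Q) (g : G) (Ss : Fin (arG g) → Set Q) : Prop :=
  ∃ (ls : Fin (arG g) → Term G arG) (r : Term G arG),
    (Term.app g ls, r) ∈ Rg.rules ∧ ∀ i, enc2 (stPattern (ls i)) ∈ Ss i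

/-- The transition rules of the automaton `𝒟(ℛ)` over `𝓕`, built from the transition
rules `Γ'` of `𝒞'_{NF}(ℛ)` over `𝓕 ∪ {•}`. -/
def DTrans {F : Type} {ar : F → ℕ} {Q : Type} (Rb : TRS (Option F) (arB ar))
    (Γ' : Set (TARule (Option F) (arB ar) Q))
    (enc enc2 : Term (Option F) (arB ar) → Q) :
    Set (TARule F ar (Set Q × Set Q)) :=
  { ρ | ∃ (f : F) (SP : Fin (ar f) → Set Q × Set Q) (P1 P2 : Set Q),
      P1 ⊆ (⋃ i : Fin (ar f), oneStep Γ' (some f)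
              (fun (j : Fin (ar f)) => if j = i then (SP j).2 else (SP j).1)) ∧
      (∀ (i : Fin (ar f)), ∀ q ∈ (SP i).2,
        (P1 ∩ oneStep Γ' (some f) (fun (j : Fin (ar f)) => if j = i then {q} else (SP j).1)).Nonempty) ∧
      ((LhsMatch Rb enc2 (some f) (fun i => (SP i).1) ∧ P2 = {enc (Term.var 0)}) ∨
       (¬ LhsMatch Rb enc2 (some f) (fun i => (SP i).1) ∧ P2 = (∅ : Set Q))) ∧
      ρ = ⟨f, SP, (oneStep Γ' (some f) (fun i => (SP i).1), P1 ∪ P2)⟩ }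

/-- The automaton `𝒟(ℛ)`: final states are the pairs `[S,P]` with `q_r ∈ S` and
`P ⊆ Q_f`. -/
def DAutomaton {F : Type} {ar : F → ℕ} {Q : Type} (Rb : TRS (Option F) (arB ar))
    (Γ' : Set (TARule (Option F) (arB ar) Q))
    (enc enc2 : Term (Option F) (arB ar) → Q) (qr : Q) (Qf : Set Q) :
    TreeAutomaton F ar (Set Q × Set Q) where
  trans := DTrans Rb Γ' enc enc2
  final := { SP | qr ∈ SP.1 ∧ SP.2 ⊆ Qf }

/-! ## Growing approximations -/

/-- `VarRepl t t'` : `t'` is obtained from `t` by replacing occurrences of variables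
by (possibly other) variables. -/
inductive VarRepl {F : Type} {ar : F → ℕ} : Term F ar → Term F ar → Prop
  | var (n m : ℕ) : VarRepl (Term.var n) (Term.var m)
  | app (f : F) (ts ts' : Fin (ar f) → Term F ar) :
      (∀ i, VarRepl (ts i) (ts' i)) → VarRepl (Term.app f ts) (Term.app f ts')

/-- `Rg` is a growing approximation of `R`: a right-linear growing TRS obtained from
`R` by replacing, in each right-hand side, occurrences of variables by variables not
occurring in the corresponding left-hand side. -/
def IsGrowingApprox {F : Type} {ar : F → ℕ} (R Rg : TRS F ar) : Prop :=
  Rg.RightLinear ∧ Rg.Growing ∧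
  (∀ lr ∈ Rg.rules, ∃ lr' ∈ R.rules, lr.1 = lr'.1 ∧ VarRepl lr'.2 lr.2 ∧
      ∀ n ∈ lr.2.vars, n ∉ lr.1.vars) ∧
  (∀ lr ∈ R.rules, ∃ lr' ∈ Rg.rules, lr.1 = lr'.1 ∧ VarRepl lr.2 lr'.2 ∧
      ∀ n ∈ lr'.2.vars, n ∉ lr'.1.vars)

/-! ## The signature `𝓖 = 𝓕 ∪ {f° : f ∈ 𝓕}` -/

/-- The arity function of the signature `𝓕 ∪ {f° : f ∈ 𝓕}` (`inl f` is `f`,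
`inr f` is `f°`). -/
def arC {F : Type} (ar : F → ℕ) : F ⊕ F → ℕ
  | Sum.inl f => ar f
  | Sum.inr f => ar f

/-- The embedding of `𝒯(𝓕)`-terms into terms over `𝓕 ∪ {f° : f ∈ 𝓕}`. -/
def liftC {F : Type} {ar : F → ℕ} : Term F ar → Term (F ⊕ F) (arC ar) :=
  Term.relabel Sum.inl (fun _ => rfl)

/-- `t°`: mark the root symbol of `t`. -/
def circTm {F : Type} {ar : F → ℕ} : Term F ar → Term (F ⊕ F) (arC ar)
  | Term.var n => Term.var n
  | Term.app f ts => Term.app (Sum.inr f) fun i => liftC (ts i)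

/-- A TRS over `𝓕` viewed as a TRS over `𝓕 ∪ {f° : f ∈ 𝓕}`. -/
def TRS.liftC {F : Type} {ar : F → ℕ} (R : TRS F ar) : TRS (F ⊕ F) (arC ar) :=
  R.relabel Sum.inl (fun _ => rfl)

/-- The TRS `𝒮° = 𝒮 ∪ {l° → r | l → r ∈ 𝒮}` over the signature `𝓕 ∪ {f° : f ∈ 𝓕}`. -/
def TRS.circ {F : Type} {ar : F → ℕ} (S : TRS F ar) : TRS (F ⊕ F) (arC ar) where
  rules := S.liftC.rules ∪ (fun lr => (circTm lr.1, _root_.liftC lr.2)) '' S.rules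
  finite := S.liftC.finite.union (S.finite.image _)
  lhs_not_var := by
    rintro lr (h | ⟨lr0, h0, rfl⟩) n hn
    · exact S.liftC.lhs_not_var lr h n hn
    · dsimp only at hn
      cases h1 : lr0.1 with
      | var m => exact absurd h1 (S.lhs_not_var lr0 h0 m)
      | app f ts =>
          rw [h1] at hn
          simp only [circTm] at hn
          simp at hn

/-- The transitions added to `ℬ(𝒮°)` to obtain `𝒜_{REDEX_{𝒮°}}`:
`f(⟨l₁⟩,…,⟨lₙ⟩) → q_f` and `f°(⟨l₁⟩,…,⟨lₙ⟩) → q_f` for each left-hand side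
`f(l₁,…,lₙ)` of a rule of `𝒮`. -/
def CircRedexRules {F : Type} {ar : F → ℕ} {Q : Type} (S : TRS F ar)
    (enc : Term (F ⊕ F) (arC ar) → Q) (qf : Q) : Set (TARule (F ⊕ F) (arC ar) Q) :=
  { ρ | ∃ (f : F) (ls : Fin (ar f) → Term F ar) (r : Term F ar),
      (Term.app f ls, r) ∈ S.rules ∧
      (ρ = ⟨Sum.inl f, fun i => enc (stPattern (liftC (ls i))), qf⟩ ∨
       ρ = ⟨Sum.inr f, fun i => enc (stPattern (liftC (ls i))), qf⟩) }

/-! ## The automaton `𝒟'(ℛ,𝒮)` -/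

/-- The data of the construction of `𝒞'_{RS_{𝒮°}}(ℛ)`: the saturated automaton
`𝒞_{RS_{𝒮°}}(ℛ)`, a fresh copy `⟪t⟫` (encoded by `enc2`, with `⟪x⟫ = ⟨x⟩`) of the
states of `ℬ(ℛ)`, and an automaton `𝒞_{REDEX_𝒮}(𝒮)` (transitions `Etrans`, final
states `Qf'`) recognizing the non-`𝒮`-root-stable ground terms of `𝒯(𝓕)`. -/
structure CrsSetup {F : Type} [Fintype F] {ar : F → ℕ} (Q : Type) [Fintype Q]
    (R S : TRS F ar) extends CSetup Q R.liftC (TRS.RSset S.circ) where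
  enc2 : Term (F ⊕ F) (arC ar) → Q
  henc2 : Set.InjOn enc2 (BStateSet R.liftC)
  hx : enc2 (Term.var 0) = enc (Term.var 0)
  hfresh2 : (enc2 '' (BStateSet R.liftC \ {Term.var 0})) ∩
              (QA ∪ enc '' BStateSet R.liftC) = ∅
  Etrans : Set (TARule (F ⊕ F) (arC ar) Q)
  Qf' : Set Q
  hQf' : Qf' ⊆ statesOf Etrans
  hEfresh : statesOf Etrans ∩
      (QA ∪ enc '' BStateSet R.liftC ∪ enc2 '' (BStateSet R.liftC \ {Term.var 0})) = ∅
  hE : ∀ t : Term (F ⊕ F) (arC ar),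
      (t.Ground ∧ ∃ q ∈ Qf', Reaches Etrans t q) ↔
      (∃ s : Term F ar, t = liftC s ∧ s.Ground ∧ ¬ S.RootStable s)

namespace CrsSetup

variable {F : Type} [Fintype F] {ar : F → ℕ} {Q : Type} [Fintype Q] {R S : TRS F ar}

/-- The transition rules `Γ'` of the automaton `𝒞'_{RS_{𝒮°}}(ℛ)`. -/
def Γ' (C : CrsSetup Q R S) : Set (TARule (F ⊕ F) (arC ar) Q) :=
  C.toCSetup.Γsat ∪ BMatch R.liftC C.enc2 ∪ C.Etrans

end CrsSetup

/-- The transition rules of the automaton `𝒟'(ℛ,𝒮)` over `𝓕`, built from the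
transition rules `Γ'` of `𝒞'_{RS_{𝒮°}}(ℛ)`. -/
def DTransRS {F : Type} {ar : F → ℕ} {Q : Type} (Rg : TRS (F ⊕ F) (arC ar))
    (Γ' : Set (TARule (F ⊕ F) (arC ar) Q)) (enc2 : Term (F ⊕ F) (arC ar) → Q) :
    Set (TARule F ar (Set Q × Set Q)) :=
  { ρ | ∃ (f : F) (SP : Fin (ar f) → Set Q × Set Q) (P1 P2 : Set Q),
      P1 ⊆ (⋃ i : Fin (ar f), oneStep Γ' (Sum.inl f)
              (fun (j : Fin (ar f)) => if j = i then (SP j).2 else (SP j).1)) ∧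
      (∀ (i : Fin (ar f)), ∀ q ∈ (SP i).2,
        (P1 ∩ oneStep Γ' (Sum.inl f) (fun (j : Fin (ar f)) => if j = i then {q} else (SP j).1)).Nonempty) ∧
      ((LhsMatch Rg enc2 (Sum.inl f) (fun i => (SP i).1) ∧ P2.Nonempty ∧
          P2 ⊆ oneStep Γ' (Sum.inr f) (fun i => (SP i).1)) ∨
       (¬ LhsMatch Rg enc2 (Sum.inl f) (fun i => (SP i).1) ∧ P2 = (∅ : Set Q))) ∧
      ρ = ⟨f, SP, (oneStep Γ' (Sum.inl f) (fun i => (SP i).1), P1 ∪ P2)⟩ }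

/-- The automaton `𝒟'(ℛ,𝒮)`: final states are the pairs `[S,P]` with
`S ∩ Q_f' ≠ ∅` and `P ⊆ Q_f`. -/
def DAutomatonRS {F : Type} {ar : F → ℕ} {Q : Type} (Rg : TRS (F ⊕ F) (arC ar))
    (Γ' : Set (TARule (F ⊕ F) (arC ar) Q)) (enc2 : Term (F ⊕ F) (arC ar) → Q)
    (Qf' Qf : Set Q) : TreeAutomaton F ar (Set Q × Set Q) where
  trans := DTransRS Rg Γ' enc2
  final := { SP | (SP.1 ∩ Qf').Nonempty ∧ SP.2 ⊆ Qf }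

/-!
The automaton for `(→_ℛ*)[T]` saturates the union of an automaton `𝒜` for `T` with the
automaton `ℬ(ℛ)`, whose state `⟨t⟩` accepts the ground instances of a subterm `t` of a
left-hand-side argument. Whenever a right-hand side `r` of a rule `f(l₁,…,lₙ) → r` reaches a
state `q` under an assignment `θ` of states to its variables, the transition
`f(q₁,…,qₙ) → q` is added, with `qᵢ = θ(lᵢ)` if `lᵢ` is a variable of `r` and `qᵢ = ⟨lᵢ⟩`
otherwise.

Completeness: the saturated automaton is closed under reverse rewriting steps, since by
right-linearity a run on `rσ` splits into a run on `r` and runs on the `σ(x)`.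

Soundness: every transition `ρ` is simulated, i.e. terms reaching the argument states of `ρ`
form, after rewriting, a term reaching its target state in the unsaturated automaton. For an
added transition one root step `f(l₁,…,lₙ)σ → rσ` does it: left-linearity glues the matchers
of the arguments into one `σ`, growth puts the shared variables at depth one so that they
sit exactly in the states `θ(lᵢ)`, and accessibility of `θ` supplies ground values for the
variables of `r` that do not occur on the left.
-/

namespace Term

variable {F : Type} {ar : F → ℕ}

theorem mem_vars_app {f : F} {ts : Fin (ar f) → Term F ar} {n : ℕ} :
    n ∈ (app f ts).vars ↔ ∃ i, n ∈ (ts i).vars := by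
  simp [vars]

theorem ground_app {f : F} {ts : Fin (ar f) → Term F ar} :
    (app f ts).Ground ↔ ∀ i, (ts i).Ground := by
  simp only [Ground, Finset.eq_empty_iff_forall_notMem, mem_vars_app, not_exists]
  exact forall_comm

theorem not_ground_var (n : ℕ) : ¬ (var n : Term F ar).Ground := by
  simp [Ground, vars]

theorem mem_vars_iff_count_pos {t : Term F ar} {n : ℕ} : n ∈ t.vars ↔ 0 < t.count n := by
  induction t with
  | var m => by_cases h : m = n <;> simp [vars, count, h, Ne.symm]
  | app f ts ih => simp [count, mem_vars_app, ih, Finset.sum_pos_iff]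

theorem count_arg_le {f : F} (ts : Fin (ar f) → Term F ar) (i : Fin (ar f)) (n : ℕ) :
    (ts i).count n ≤ (app f ts).count n :=
  Finset.single_le_sum (f := fun j => (ts j).count n) (fun _ _ => Nat.zero_le _)
    (Finset.mem_univ i)

theorem Linear.arg {f : F} {ts : Fin (ar f) → Term F ar} (h : (app f ts).Linear)
    (i : Fin (ar f)) : (ts i).Linear :=
  fun n => (count_arg_le ts i n).trans (h n)

theorem Linear.eq_of_mem_vars {f : F} {ts : Fin (ar f) → Term F ar} (h : (app f ts).Linear)
    {n : ℕ} {i j : Fin (ar f)} (hi : n ∈ (ts i).vars) (hj : n ∈ (ts j).vars) : i = j := by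
  by_contra hne
  have hsum : (ts i).count n + (ts j).count n ≤ (app f ts).count n :=
    Finset.add_le_sum (f := fun k => (ts k).count n) (fun _ _ => Nat.zero_le _)
      (Finset.mem_univ i) (Finset.mem_univ j) hne
  rw [mem_vars_iff_count_pos] at hi hj
  linarith [h n]

theorem Linear.exists_agree_on_args {α : Type*} {f : F} {ts : Fin (ar f) → Term F ar}
    (h : (app f ts).Linear) (θs : Fin (ar f) → ℕ → α) (τ : ℕ → α) :
    ∃ θ : ℕ → α, (∀ i, ∀ n ∈ (ts i).vars, θ n = θs i n) ∧
      ∀ n ∉ (app f ts).vars, θ n = τ n := by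
  classical
  refine ⟨fun n => if hn : ∃ i, n ∈ (ts i).vars then θs hn.choose n else τ n, ?_, ?_⟩
  · intro i n hn
    have hex : ∃ i, n ∈ (ts i).vars := ⟨i, hn⟩
    simp only [dif_pos hex]
    rw [h.eq_of_mem_vars hex.choose_spec hn]
  · intro n hn
    simp only [dif_neg (mem_vars_app.not.mp hn)]

theorem subst_congr {t : Term F ar} {σ σ' : ℕ → Term F ar}
    (h : ∀ n ∈ t.vars, σ n = σ' n) : t.subst σ = t.subst σ' := by
  induction t with
  | var n => exact h n (by simp [vars])
  | app f ts ih =>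
    exact congrArg (app f) (funext fun i => ih i fun n hn => h n (mem_vars_app.mpr ⟨i, hn⟩))

theorem ground_subst_iff {t : Term F ar} {σ : ℕ → Term F ar} :
    (t.subst σ).Ground ↔ ∀ n ∈ t.vars, (σ n).Ground := by
  induction t with
  | var n => simp [subst, vars]
  | app f ts ih =>
    simp only [subst, ground_app, ih, mem_vars_app, forall_exists_index]
    exact forall_comm

theorem Ground.subst_eq {t : Term F ar} (h : t.Ground) (σ : ℕ → Term F ar) :
    t.subst σ = t := by
  induction t with
  | var n => exact absurd h (not_ground_var n)
  | app f ts ih => exact congrArg (app f) (funext fun i => ih i (ground_app.mp h i))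

theorem subst_subst (t : Term F ar) (σ τ : ℕ → Term F ar) :
    (t.subst σ).subst τ = t.subst fun n => (σ n).subst τ := by
  induction t with
  | var n => rfl
  | app f ts ih => exact congrArg (app f) (funext ih)

theorem Linear.exists_subst_app {f : F} {ts us : Fin (ar f) → Term F ar}
    (h : (app f ts).Linear) (hus : ∀ i, ∃ σ, us i = (ts i).subst σ) (τ : ℕ → Term F ar) :
    ∃ σ, (∀ i, us i = (ts i).subst σ) ∧ ∀ n ∉ (app f ts).vars, σ n = τ n := by
  choose σs hσs using hus
  obtain ⟨σ, hσ, hτ⟩ := h.exists_agree_on_args σs τ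
  exact ⟨σ, fun i => (hσs i).trans (subst_congr fun n hn => (hσ i n hn).symm), hτ⟩

theorem subtermAt_nil (t : Term F ar) : t.subtermAt [] = some t := by
  cases t <;> rfl

theorem replaceAt_nil (t u : Term F ar) : t.replaceAt [] u = some u := by
  cases t <;> rfl

theorem subtermAt_append (t : Term F ar) (p p' : List ℕ) :
    t.subtermAt (p ++ p') = (t.subtermAt p).bind fun u => u.subtermAt p' := by
  induction p generalizing t with
  | nil => simp [subtermAt_nil]
  | cons i p ih =>
    cases t with
    | var n => rfl
    | app f ts =>
      simp only [List.cons_append, subtermAt]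
      split
      · exact ih _
      · rfl

theorem IsSubtermOf.refl (t : Term F ar) : t.IsSubtermOf t := ⟨[], subtermAt_nil t⟩

theorem IsSubtermOf.trans {s u t : Term F ar} (hsu : s.IsSubtermOf u) (hut : u.IsSubtermOf t) :
    s.IsSubtermOf t := by
  obtain ⟨p, hp⟩ := hsu
  obtain ⟨p', hp'⟩ := hut
  exact ⟨p' ++ p, by rw [subtermAt_append, hp']; exact hp⟩

theorem isSubtermOf_arg {f : F} (ts : Fin (ar f) → Term F ar) (i : Fin (ar f)) :
    (ts i).IsSubtermOf (app f ts) :=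
  ⟨[i.1], by simp [subtermAt, subtermAt_nil]⟩

theorem IsSubtermOf.count_le {s t : Term F ar} (h : s.IsSubtermOf t) (n : ℕ) :
    s.count n ≤ t.count n := by
  obtain ⟨p, hp⟩ := h
  induction p generalizing t with
  | nil => rw [subtermAt_nil, Option.some_inj] at hp; rw [hp]
  | cons i p ih =>
    cases t with
    | var m => simp [subtermAt] at hp
    | app f ts =>
      simp only [subtermAt] at hp
      split at hp
      · next hi => exact (ih hp).trans (count_arg_le ts ⟨i, hi⟩ n)
      · simp at hp

theorem IsSubtermOf.linear {s t : Term F ar} (h : s.IsSubtermOf t) (ht : t.Linear) :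
    s.Linear :=
  fun n => (h.count_le n).trans (ht n)

theorem IsSubtermOf.ground {s t : Term F ar} (h : s.IsSubtermOf t) (ht : t.Ground) :
    s.Ground := by
  refine Finset.eq_empty_of_forall_notMem fun n hn => ?_
  rw [mem_vars_iff_count_pos] at hn
  have := mem_vars_iff_count_pos.mpr (hn.trans_le (h.count_le n))
  rw [ht] at this
  exact Finset.notMem_empty n this

theorem finite_setOf_isSubtermOf (t : Term F ar) : {s : Term F ar | s.IsSubtermOf t}.Finite := by
  induction t with
  | var n =>
    refine (Set.finite_singleton (var n)).subset ?_
    rintro s ⟨_ | ⟨i, p⟩, hp⟩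
    · rw [subtermAt_nil, Option.some_inj] at hp
      exact hp.symm
    · simp [subtermAt] at hp
  | app f ts ih =>
    refine ((Set.finite_iUnion ih).insert (app f ts)).subset ?_
    rintro s ⟨_ | ⟨i, p⟩, hp⟩
    · rw [subtermAt_nil, Option.some_inj] at hp
      exact Or.inl hp.symm
    · simp only [subtermAt] at hp
      split at hp
      · next hi => exact Or.inr (Set.mem_iUnion.mpr ⟨⟨i, hi⟩, p, hp⟩)
      · simp at hp

theorem replaceAt_of_subtermAt {t u : Term F ar} {p : List ℕ} (h : t.subtermAt p = some u) :
    t.replaceAt p u = some t := by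
  induction p generalizing t with
  | nil => rw [subtermAt_nil, Option.some_inj] at h; rw [h, replaceAt_nil]
  | cons i p ih =>
    cases t with
    | var n => simp [subtermAt] at h
    | app f ts =>
      simp only [subtermAt] at h
      split at h
      · next hi => simp [replaceAt, hi, ih h]
      · simp at h

theorem subtermAt_subst {t u : Term F ar} {p : List ℕ} (h : t.subtermAt p = some u)
    (σ : ℕ → Term F ar) : (t.subst σ).subtermAt p = some (u.subst σ) := by
  induction p generalizing t with
  | nil => rw [subtermAt_nil, Option.some_inj] at h; rw [h, subtermAt_nil]
  | cons i p ih =>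
    cases t with
    | var n => simp [subtermAt] at h
    | app f ts =>
      simp only [subtermAt] at h
      split at h
      · next hi => simpa [subst, subtermAt, hi] using ih h
      · simp at h

theorem replaceAt_subst {t v w : Term F ar} {p : List ℕ} (h : t.replaceAt p w = some v)
    (σ : ℕ → Term F ar) : (t.subst σ).replaceAt p (w.subst σ) = some (v.subst σ) := by
  induction p generalizing t v with
  | nil => rw [replaceAt_nil, Option.some_inj] at h; rw [← h, replaceAt_nil]
  | cons i p ih =>
    cases t with
    | var n => simp [replaceAt] at h
    | app f ts =>
      simp only [replaceAt] at h
      split at h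
      · next hi =>
        obtain ⟨c, hc, rfl⟩ := Option.map_eq_some_iff.mp h
        simp only [subst, replaceAt, dif_pos hi, ih hc, Option.map_some, Option.some_inj]
        congr 1
        funext j
        rcases eq_or_ne j ⟨i, hi⟩ with rfl | hne
        · simp
        · simp [Function.update_of_ne hne]
      · simp at h

end Term

section Rewriting

open Term

variable {F : Type} {ar : F → ℕ} {R : Set (Term F ar × Term F ar)}

theorem Rewrites.root {l r : Term F ar} (h : (l, r) ∈ R) (σ : ℕ → Term F ar) :
    Rewrites R (l.subst σ) (r.subst σ) :=
  ⟨[], l, r, σ, h, subtermAt_nil _, replaceAt_nil _ _⟩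

theorem Rewrites.subst {u v : Term F ar} (h : Rewrites R u v) (τ : ℕ → Term F ar) :
    Rewrites R (u.subst τ) (v.subst τ) := by
  obtain ⟨p, l, r, σ, hlr, hu, hv⟩ := h
  refine ⟨p, l, r, fun n => (σ n).subst τ, hlr, ?_, ?_⟩
  · rw [← subst_subst]
    exact subtermAt_subst hu τ
  · rw [← subst_subst]
    exact replaceAt_subst hv τ

theorem Rewrites.app_update {f : F} {ts : Fin (ar f) → Term F ar} {i : Fin (ar f)}
    {a b : Term F ar} (h : Rewrites R a b) :
    Rewrites R (app f (Function.update ts i a)) (app f (Function.update ts i b)) := by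
  obtain ⟨p, l, r, σ, hlr, ha, hb⟩ := h
  refine ⟨i.1 :: p, l, r, σ, hlr, ?_, ?_⟩
  · simpa [subtermAt] using ha
  · simp [replaceAt, hb]

theorem rewritesStar_app {f : F} {ts ts' : Fin (ar f) → Term F ar}
    (h : ∀ i, RewritesStar R (ts i) (ts' i)) :
    RewritesStar R (app f ts) (app f ts') := by
  classical
  suffices ∀ s : Finset (Fin (ar f)), RewritesStar R (app f ts) (app f (s.piecewise ts' ts)) by
    simpa using this Finset.univ
  intro s
  induction s using Finset.induction_on with
  | empty => simpa using Relation.ReflTransGen.refl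
  | insert a s ha ih =>
    have hupd : Function.update (s.piecewise ts' ts) a (ts a) = s.piecewise ts' ts :=
      Function.update_eq_self_iff.mpr (Finset.piecewise_eq_of_notMem _ _ _ ha).symm
    rw [Finset.piecewise_insert]
    refine ih.trans ?_
    rw [← hupd, Function.update_idem]
    exact (h a).lift _ fun _ _ => Rewrites.app_update

end Rewriting

section Automata

open Term

variable {F : Type} {ar : F → ℕ} {Q : Type} {Γ Γ' : Set (TARule F ar Q)}

theorem Reaches.mono (hΓ : Γ ⊆ Γ') {t : Term F ar} {q : Q} (h : Reaches Γ t q) :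
    Reaches Γ' t q := by
  induction h with
  | app _ hmem ih => exact .app ih (hΓ hmem)

theorem Reaches.ground {t : Term F ar} {q : Q} (h : Reaches Γ t q) : t.Ground := by
  induction h with
  | app _ _ ih => exact ground_app.mpr ih

theorem ReachesT.mono (hΓ : Γ ⊆ Γ') {θ : ℕ → Q} {t : Term F ar} {q : Q}
    (h : ReachesT Γ θ t q) : ReachesT Γ' θ t q := by
  induction h with
  | var n => exact .var n
  | app _ hmem ih => exact .app ih (hΓ hmem)

theorem ReachesT.congr {θ θ' : ℕ → Q} {t : Term F ar} {q : Q}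
    (hθ : ∀ n ∈ t.vars, θ n = θ' n) (h : ReachesT Γ θ t q) : ReachesT Γ θ' t q := by
  induction h with
  | var n => exact hθ n (by simp [vars]) ▸ .var n
  | app _ hmem ih => exact .app (fun i => ih i fun n hn => hθ n (mem_vars_app.mpr ⟨i, hn⟩)) hmem

theorem ReachesT.exists_of_iUnion {Γs : ℕ → Set (TARule F ar Q)} (hΓs : Monotone Γs)
    {θ : ℕ → Q} {t : Term F ar} {q : Q} (h : ReachesT (⋃ n, Γs n) θ t q) :
    ∃ n, ReachesT (Γs n) θ t q := by
  induction h with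
  | var n => exact ⟨0, .var n⟩
  | app _ hmem ih =>
    obtain ⟨n, hn⟩ := Set.mem_iUnion.mp hmem
    choose ns hns using ih
    refine ⟨max n (Finset.univ.sup ns), .app (fun i => (hns i).mono (hΓs ?_)) (hΓs ?_ hn)⟩
    · exact (Finset.le_sup (Finset.mem_univ i)).trans (le_max_right _ _)
    · exact le_max_left _ _

theorem Reaches.exists_of_replaceAt {p : List ℕ} :
    ∀ {s v s' : Term F ar} {q : Q}, s.replaceAt p v = some s' → Reaches Γ s' q →
      ∃ q₀, Reaches Γ v q₀ ∧ ∀ {w s''}, s.replaceAt p w = some s'' → Reaches Γ w q₀ →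
        Reaches Γ s'' q := by
  induction p with
  | nil =>
    intro s v s' q hv h
    rw [replaceAt_nil, Option.some_inj] at hv
    subst hv
    refine ⟨q, h, fun hw hr => ?_⟩
    rw [replaceAt_nil, Option.some_inj] at hw
    exact hw ▸ hr
  | cons i p ih =>
    intro s v s' q hv h
    cases s with
    | var n => simp [replaceAt] at hv
    | app f ts =>
      simp only [replaceAt] at hv
      split at hv
      · next hi =>
        obtain ⟨c, hc, rfl⟩ := Option.map_eq_some_iff.mp hv
        cases h with
        | app hch hmem =>
          obtain ⟨q₀, hq₀, hctx⟩ := ih hc (by simpa using hch ⟨i, hi⟩)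
          refine ⟨q₀, hq₀, fun hw hr => ?_⟩
          simp only [replaceAt, dif_pos hi, Option.map_eq_some_iff] at hw
          obtain ⟨c', hc', rfl⟩ := hw
          refine .app (fun j => ?_) hmem
          rcases eq_or_ne j ⟨i, hi⟩ with rfl | hne
          · simpa using hctx hc' hr
          · simpa [hne] using hch j
      · simp at hv

theorem Reaches.exists_reachesT_of_subst {t : Term F ar} (ht : t.Linear) {σ : ℕ → Term F ar}
    {q : Q} (h : Reaches Γ (t.subst σ) q) :
    ∃ θ, ReachesT Γ θ t q ∧ ∀ n ∈ t.vars, Reaches Γ (σ n) (θ n) := by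
  induction t generalizing q with
  | var n => exact ⟨fun _ => q, .var n, by simpa [vars, subst] using h⟩
  | app f ts ih =>
    cases h with
    | app hch hmem =>
      choose θs hθs hσθs using fun i => ih i (ht.arg i) (hch i)
      obtain ⟨θ, hθ, -⟩ := ht.exists_agree_on_args θs fun _ => q
      refine ⟨θ, .app (fun i => (hθs i).congr fun n hn => (hθ i n hn).symm) hmem, ?_⟩
      intro n hn
      obtain ⟨i, hi⟩ := mem_vars_app.mp hn
      exact hθ i n hi ▸ hσθs i n hi

end Automata

section Saturation

open Term

variable {F : Type} {ar : F → ℕ} {Q : Type} {R : TRS F ar} {enc : Term F ar → Q} {Qc : Set Q}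
  {Γ₀ : Set (TARule F ar Q)}

theorem monotone_iterate_satStep :
    Monotone fun n => (satStep R enc Qc)^[n] Γ₀ :=
  monotone_nat_of_le_succ fun n => by
    simp only [Function.iterate_succ_apply']
    exact Set.subset_union_left

theorem subset_satGamma : Γ₀ ⊆ satGamma R enc Qc Γ₀ :=
  Set.subset_iUnion (fun n => (satStep R enc Qc)^[n] Γ₀) 0

theorem mem_satGamma {f : F} {ls : Fin (ar f) → Term F ar} {r : Term F ar} {θ : ℕ → Q} {q : Q}
    (hlr : (app f ls, r) ∈ R.rules) (hθ : ∀ n ∈ r.vars, θ n ∈ Qc)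
    (h : ReachesT (satGamma R enc Qc Γ₀) θ r q) :
    (⟨f, fun i => satArg enc θ r.vars (ls i), q⟩ : TARule F ar Q) ∈ satGamma R enc Qc Γ₀ := by
  obtain ⟨n, hn⟩ := h.exists_of_iUnion monotone_iterate_satStep
  refine Set.mem_iUnion.mpr ⟨n + 1, ?_⟩
  rw [Function.iterate_succ_apply']
  exact Or.inr ⟨f, ls, r, θ, q, hlr, hθ, hn, rfl⟩

end Saturation

section LhsSubterms

open Term

variable {F : Type} {ar : F → ℕ} {R : TRS F ar}

theorem finite_SR (R : TRS F ar) : (SR R).Finite := by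
  refine (R.finite.biUnion fun lr _ => finite_setOf_isSubtermOf lr.1).subset ?_
  rintro s ⟨lr, hlr, f, ts, hl, i, hs⟩
  exact Set.mem_biUnion hlr (hs.trans (hl ▸ isSubtermOf_arg ts i))

theorem finite_BStateSet (R : TRS F ar) : (BStateSet R).Finite :=
  ((finite_SR R).image _).union (Set.finite_singleton _)

instance (R : TRS F ar) : Finite (BStateSet R) := (finite_BStateSet R).to_subtype

theorem arg_mem_SR {g : F} {ss : Fin (ar g) → Term F ar} (h : app g ss ∈ SR R)
    (i : Fin (ar g)) : ss i ∈ SR R := by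
  obtain ⟨lr, hlr, f, ts, hl, j, hs⟩ := h
  exact ⟨lr, hlr, f, ts, hl, j, (isSubtermOf_arg ss i).trans hs⟩

theorem lhs_arg_mem_SR {f : F} {ls : Fin (ar f) → Term F ar} {r : Term F ar}
    (hlr : (app f ls, r) ∈ R.rules) (i : Fin (ar f)) : ls i ∈ SR R :=
  ⟨_, hlr, f, ls, rfl, i, .refl _⟩

theorem linear_of_mem_SR (hL : R.LeftLinear) {s : Term F ar} (h : s ∈ SR R) : s.Linear := by
  obtain ⟨lr, hlr, f, ts, hl, i, hs⟩ := h
  exact (hs.trans (hl ▸ isSubtermOf_arg ts i)).linear (hL lr hlr)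

theorem stPattern_mem_BStateSet {s : Term F ar} (h : s ∈ SR R) : stPattern s ∈ BStateSet R :=
  Or.inl ⟨s, h, rfl⟩

theorem var_zero_mem_BStateSet (R : TRS F ar) : (var 0 : Term F ar) ∈ BStateSet R :=
  Or.inr rfl

theorem exists_subst_stPattern_iff {u t : Term F ar} :
    (∃ σ, u = (stPattern t).subst σ) ↔ ∃ σ, u = t.subst σ := by
  cases t with
  | var n => exact ⟨fun _ => ⟨fun _ => u, rfl⟩, fun _ => ⟨fun _ => u, rfl⟩⟩
  | app f ts => rfl

end LhsSubterms

namespace GrowingSaturation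

open Term

variable {G : Type} {arG : G → ℕ}

variable (R : TRS G arG) (Q : Type) in
abbrev State : Type := Q ⊕ BStateSet R

variable {R : TRS G arG} {Q : Type}

open Classical in
/-- Only the values on `BStateSet R` matter; other terms are sent to `⟨x⟩`. -/
noncomputable def enc (t : Term G arG) : State R Q :=
  .inr (if h : t ∈ BStateSet R then ⟨t, h⟩ else ⟨var 0, var_zero_mem_BStateSet R⟩)

theorem enc_ne_inl (t : Term G arG) (q : Q) : (enc t : State R Q) ≠ .inl q :=
  Sum.inr_ne_inl

theorem enc_injOn : Set.InjOn (enc : Term G arG → State R Q) (BStateSet R) := by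
  intro t ht t' ht' h
  simpa [enc, ht, ht'] using h

variable (R) (A : TreeAutomaton G arG Q)

def liftTrans : Set (TARule G arG (State R Q)) :=
  (fun ρ => ⟨ρ.1, Sum.inl ∘ ρ.2.1, .inl ρ.2.2⟩) '' A.trans

def initTrans : Set (TARule G arG (State R Q)) := liftTrans R A ∪ BTrans R enc

def accessible : Set (State R Q) := {q | ∃ u, Reaches (initTrans R A) u q}

noncomputable def satTrans : Set (TARule G arG (State R Q)) :=
  satGamma R enc (accessible R A) (initTrans R A)

variable {R A}

theorem subset_satTrans : initTrans R A ⊆ satTrans R A := subset_satGamma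

theorem reaches_initTrans_inl_iff {t : Term G arG} {q : Q} :
    Reaches (initTrans R A) t (.inl q) ↔ Reaches A.trans t q := by
  constructor
  · generalize hx : (Sum.inl q : State R Q) = x
    intro h
    induction h generalizing q with
    | app _ hmem ih =>
      rcases hmem with ⟨ρ, hρ, he⟩ | ⟨g, ss, -, he⟩ | ⟨g, he⟩
      · cases he
        cases hx
        exact .app (fun i => ih i rfl) hρ
      · cases he
        exact absurd hx.symm (enc_ne_inl _ _)
      · cases he
        exact absurd hx.symm (enc_ne_inl _ _)
  · intro h
    induction h with
    | app _ hmem ih => exact .app (qs := Sum.inl ∘ _) ih (Or.inl ⟨_, hmem, rfl⟩)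

theorem reaches_enc_var_zero {u : Term G arG} (hu : u.Ground) :
    Reaches (initTrans R A) u (enc (var 0)) := by
  induction u with
  | var n => exact absurd hu (not_ground_var n)
  | app f ts ih => exact .app (fun i => ih i (ground_app.mp hu i)) (Or.inr (Or.inr ⟨f, rfl⟩))

theorem reaches_enc_stPattern {t : Term G arG} (ht : t ∈ SR R) {σ : ℕ → Term G arG}
    (hσ : ∀ n ∈ t.vars, (σ n).Ground) :
    Reaches (initTrans R A) (t.subst σ) (enc (stPattern t)) := by
  induction t with
  | var n => exact reaches_enc_var_zero (hσ n (by simp [vars]))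
  | app f ts ih =>
    exact .app (fun i => ih i (arg_mem_SR ht i) fun n hn => hσ n (mem_vars_app.mpr ⟨i, hn⟩))
      (Or.inr (Or.inl ⟨f, ts, ht, rfl⟩))

theorem exists_subst_of_reaches_enc (hL : R.LeftLinear) {u : Term G arG} {x : State R Q}
    (h : Reaches (initTrans R A) u x) : ∀ t ∈ BStateSet R, x = enc t → ∃ σ, u = t.subst σ := by
  induction h with
  | @app f us qs q _ hmem ih =>
    intro t ht hq
    rcases hmem with ⟨ρ, -, he⟩ | ⟨g, ss, hss, he⟩ | ⟨g, he⟩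
    · cases he
      exact absurd hq.symm (enc_ne_inl _ _)
    · cases he
      obtain rfl : t = app f ss := enc_injOn ht (stPattern_mem_BStateSet hss) hq.symm
      have hargs : ∀ i, ∃ σ, us i = (ss i).subst σ := fun i =>
        exists_subst_stPattern_iff.mp (ih i _ (stPattern_mem_BStateSet (arg_mem_SR hss i)) rfl)
      obtain ⟨σ, hσ, -⟩ := (linear_of_mem_SR hL hss).exists_subst_app hargs fun _ => var 0
      exact ⟨σ, congrArg (app f) (funext hσ)⟩
    · cases he
      obtain rfl : t = var 0 := enc_injOn ht (var_zero_mem_BStateSet R) hq.symm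
      exact ⟨fun _ => app f us, rfl⟩

variable (R A) in
def IsSimulated (ρ : TARule G arG (State R Q)) : Prop :=
  ∀ us : Fin (arG ρ.1) → Term G arG, (∀ i, Reaches (initTrans R A) (us i) (ρ.2.1 i)) →
    ∃ t, RewritesStar R.rules (app ρ.1 us) t ∧ Reaches (initTrans R A) t ρ.2.2

theorem exists_rewritesStar_of_reaches {Γ : Set (TARule G arG (State R Q))}
    (hΓ : ∀ ρ ∈ Γ, IsSimulated R A ρ) {s : Term G arG} {q : State R Q} (h : Reaches Γ s q) :
    ∃ t, RewritesStar R.rules s t ∧ Reaches (initTrans R A) t q := by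
  induction h with
  | @app f _ qs q _ hmem ih =>
    choose ts hts hreach using ih
    obtain ⟨t, hst, ht⟩ := hΓ ⟨f, qs, q⟩ hmem ts hreach
    exact ⟨t, (rewritesStar_app hts).trans hst, ht⟩

theorem exists_rewritesStar_of_reachesT {Γ : Set (TARule G arG (State R Q))}
    (hΓ : ∀ ρ ∈ Γ, IsSimulated R A ρ) {θ : ℕ → State R Q} {r : Term G arG} {q : State R Q}
    (h : ReachesT Γ θ r q) {σ : ℕ → Term G arG}
    (hσ : ∀ n ∈ r.vars, Reaches (initTrans R A) (σ n) (θ n)) :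
    ∃ t, RewritesStar R.rules (r.subst σ) t ∧ Reaches (initTrans R A) t q := by
  induction h with
  | var n => exact ⟨σ n, .refl, hσ n (by simp [vars])⟩
  | @app f _ qs q _ hmem ih =>
    choose ts hts hreach using fun i => ih i fun n hn => hσ n (mem_vars_app.mpr ⟨i, hn⟩)
    obtain ⟨t, hst, ht⟩ := hΓ ⟨f, qs, q⟩ hmem ts hreach
    exact ⟨t, (rewritesStar_app hts).trans hst, ht⟩

theorem exists_subst_of_reaches_satArg (hL : R.LeftLinear) (hgrow : R.Growing)
    {f : G} {ls : Fin (arG f) → Term G arG} {r : Term G arG} (hlr : (app f ls, r) ∈ R.rules)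
    {θ : ℕ → State R Q} (hθ : ∀ n ∈ r.vars, θ n ∈ accessible R A)
    {us : Fin (arG f) → Term G arG}
    (hus : ∀ i, Reaches (initTrans R A) (us i) (satArg enc θ r.vars (ls i))) :
    ∃ σ, (∀ i, us i = (ls i).subst σ) ∧ ∀ n ∈ r.vars, Reaches (initTrans R A) (σ n) (θ n) := by
  have hargs : ∀ i, ∃ σ, us i = (ls i).subst σ := by
    intro i
    have hi := hus i
    cases hls : ls i with
    | var n => exact ⟨fun _ => us i, rfl⟩
    | app g ss =>
      rw [hls] at hi
      exact exists_subst_of_reaches_enc hL hi _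
        (stPattern_mem_BStateSet (hls ▸ lhs_arg_mem_SR hlr i)) rfl
  have hwit : ∀ n, ∃ u, n ∈ r.vars → Reaches (initTrans R A) u (θ n) := by
    intro n
    by_cases hn : n ∈ r.vars
    · obtain ⟨u, hu⟩ := hθ n hn
      exact ⟨u, fun _ => hu⟩
    · exact ⟨var 0, fun h => absurd h hn⟩
  choose τ hτ using hwit
  obtain ⟨σ, hσ, hστ⟩ := (hL _ hlr).exists_subst_app hargs τ
  refine ⟨σ, hσ, fun n hnr => ?_⟩
  by_cases hnl : n ∈ (app f ls).vars
  · obtain ⟨i, hni⟩ := mem_vars_app.mp hnl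
    have hls : ls i = var n := hgrow _ hlr n hnl hnr f ls rfl i hni
    simpa [hσ i, hls, subst, satArg, hnr] using hus i
  · exact hστ n hnl ▸ hτ n hnr

theorem isSimulated_satStep (hL : R.LeftLinear) (hgrow : R.Growing)
    {Γ : Set (TARule G arG (State R Q))} (hΓ : ∀ ρ ∈ Γ, IsSimulated R A ρ) :
    ∀ ρ ∈ satStep R enc (accessible R A) Γ, IsSimulated R A ρ := by
  rintro ρ (hρ | ⟨f, ls, r, θ, q, hlr, hθ, hr, rfl⟩)
  · exact hΓ ρ hρ
  · intro us hus
    obtain ⟨σ, hσ, hσθ⟩ := exists_subst_of_reaches_satArg hL hgrow hlr hθ hus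
    obtain ⟨t, hrt, ht⟩ := exists_rewritesStar_of_reachesT hΓ hr hσθ
    have hroot : app f us = (app f ls).subst σ := congrArg (app f) (funext hσ)
    exact ⟨t, .head (hroot ▸ Rewrites.root hlr σ) hrt, ht⟩

theorem isSimulated_of_mem_satTrans (hL : R.LeftLinear) (hgrow : R.Growing)
    {ρ : TARule G arG (State R Q)} (hρ : ρ ∈ satTrans R A) : IsSimulated R A ρ := by
  obtain ⟨n, hn⟩ := Set.mem_iUnion.mp hρ
  induction n generalizing ρ with
  | zero => exact fun us hus => ⟨_, .refl, .app hus hn⟩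
  | succ n ih =>
    rw [Function.iterate_succ_apply'] at hn
    exact isSimulated_satStep hL hgrow (fun ρ hρ' => ih (Set.mem_iUnion.mpr ⟨n, hρ'⟩) hρ') ρ hn

theorem exists_rewritesStar_of_reaches_satTrans (hL : R.LeftLinear) (hgrow : R.Growing)
    {s : Term G arG} {q : State R Q} (h : Reaches (satTrans R A) s q) :
    ∃ t, RewritesStar R.rules s t ∧ Reaches (initTrans R A) t q :=
  exists_rewritesStar_of_reaches (fun _ => isSimulated_of_mem_satTrans hL hgrow) h

theorem reaches_lhs_of_reaches_rhs (hL : R.LeftLinear) (hRL : R.RightLinear)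
    (hgrow : R.Growing) {l r : Term G arG} (hlr : (l, r) ∈ R.rules) {σ : ℕ → Term G arG}
    (hl : (l.subst σ).Ground) {q : State R Q} (h : Reaches (satTrans R A) (r.subst σ) q) :
    Reaches (satTrans R A) (l.subst σ) q := by
  obtain ⟨θ, hrθ, hσθ⟩ := h.exists_reachesT_of_subst (hRL _ hlr)
  have hθ : ∀ n ∈ r.vars, θ n ∈ accessible R A := fun n hn =>
    have ⟨t, _, ht⟩ := exists_rewritesStar_of_reaches_satTrans hL hgrow (hσθ n hn)
    ⟨t, ht⟩
  cases l with
  | var n => exact absurd rfl (R.lhs_not_var _ hlr n)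
  | app f ls =>
    refine .app (fun i => ?_) (mem_satGamma hlr hθ hrθ)
    have hgi : ∀ n ∈ (ls i).vars, (σ n).Ground := fun n hn =>
      ground_subst_iff.mp hl n (mem_vars_app.mpr ⟨i, hn⟩)
    have hpat := reaches_enc_stPattern (A := A) (lhs_arg_mem_SR hlr i) hgi
    cases hls : ls i with
    | var n =>
      by_cases hnr : n ∈ r.vars
      · simpa [satArg, hnr, subst] using hσθ n hnr
      · simpa [satArg, hnr, hls, stPattern] using hpat.mono subset_satTrans
    | app g ss => simpa [hls, satArg, stPattern] using hpat.mono subset_satTrans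

theorem reaches_of_rewrites (hL : R.LeftLinear) (hRL : R.RightLinear) (hgrow : R.Growing)
    {s s' : Term G arG} (hs : s.Ground) (hss' : Rewrites R.rules s s') {q : State R Q}
    (h : Reaches (satTrans R A) s' q) : Reaches (satTrans R A) s q := by
  obtain ⟨p, l, r, σ, hlr, hl, hr⟩ := hss'
  obtain ⟨q₀, hq₀, hctx⟩ := h.exists_of_replaceAt hr
  exact hctx (replaceAt_of_subtermAt hl)
    (reaches_lhs_of_reaches_rhs hL hRL hgrow hlr (IsSubtermOf.ground ⟨p, hl⟩ hs) hq₀)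

theorem reaches_of_rewritesStar (hL : R.LeftLinear) (hRL : R.RightLinear) (hgrow : R.Growing)
    {s t : Term G arG} (hs : s.Ground) (hst : RewritesStar R.rules s t) {q : State R Q}
    (ht : Reaches (satTrans R A) t q) : Reaches (satTrans R A) s q := by
  -- Rewriting may introduce variables, so the sequence is instantiated by the ground `s`.
  suffices ∀ u, RewritesStar R.rules u t →
      Reaches (satTrans R A) (u.subst fun _ => s) q by
    simpa [hs.subst_eq] using this s hst
  intro u hut
  induction hut using Relation.ReflTransGen.head_induction_on with
  | refl => rwa [ht.ground.subst_eq]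
  | head huv _ ih =>
    exact reaches_of_rewrites hL hRL hgrow (ground_subst_iff.mpr fun _ _ => hs)
      (huv.subst _) ih

theorem lang_satTrans (hlin : R.IsLinear) (hgrow : R.Growing) :
    Lang ⟨satTrans R A, Sum.inl '' A.final⟩ =
      { s : Term G arG | s.Ground ∧ ∃ t ∈ Lang A, RewritesStar R.rules s t } := by
  obtain ⟨hL, hRL⟩ := hlin
  ext s
  constructor
  · rintro ⟨hs, _, ⟨q, hq, rfl⟩, h⟩
    obtain ⟨t, hst, ht⟩ := exists_rewritesStar_of_reaches_satTrans hL hgrow h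
    exact ⟨hs, t, ⟨ht.ground, q, hq, reaches_initTrans_inl_iff.mp ht⟩, hst⟩
  · rintro ⟨hs, t, ⟨-, q, hq, ht⟩, hst⟩
    have ht' : Reaches (satTrans R A) t (.inl q) :=
      (reaches_initTrans_inl_iff.mpr ht).mono subset_satTrans
    exact ⟨hs, _, ⟨q, hq, rfl⟩, reaches_of_rewritesStar hL hRL hgrow hs hst ht'⟩

end GrowingSaturation

theorem statement0_general {G : Type} {arG : G → ℕ} (R : TRS G arG)
    (hlin : R.IsLinear) (hgrow : R.Growing)
    (T : Set (Term G arG)) (hT : Recognizable T) :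
    Recognizable { s : Term G arG | s.Ground ∧ ∃ t ∈ T, RewritesStar R.rules s t } := by
  obtain ⟨Q, _, A, rfl⟩ := hT
  exact ⟨GrowingSaturation.State R Q, Fintype.ofFinite _, _,
    (GrowingSaturation.lang_satTrans hlin hgrow).symm⟩

/-- For every linear growing TRS `ℛ` over a signature `𝓖` and every
recognizable set `T` of ground terms, the set `(→_ℛ*)[T]` of ground terms that rewrite
in `ℛ` to a term in `T` is recognizable. -/
theorem statement0 {G : Type} [Fintype G] {arG : G → ℕ} (R : TRS G arG)
    (hlin : R.IsLinear) (hgrow : R.Growing)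
    (T : Set (Term G arG)) (hT : Recognizable T) :
    Recognizable { s : Term G arG | s.Ground ∧ ∃ t ∈ T, RewritesStar R.rules s t } :=
  statement0_general R hlin hgrow T hT
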